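/- (Classical content of the character-code theorem.) Let q be a power of an odd prime, m ≥ 1, and for 0 ≤ r ≤ m let C_q(r, m) ⊆ F_q^{2^m} be the character code of order r. Then for 0 ≤ r_1 < r_2 ≤ m: (i) C_q(r_1, m) ⊆ C_q(r_2, m); (ii) dim_{F_q} C_q(r, m) = s_m(r) = Σ_{i=0}^r binom(m, i) for every 0 ≤ r ≤ m. -/

import Mathlib

/-!
The code `C_q(r, m)` is read through the Walsh matrix `H x y = (-1)^{x·y}`: a word `c` lies in it
exactly when the entries of `c H` at weights `> r` vanish. Orthogonality of characters gives
`H H = 2^m`, so `H` is invertible once `2 ≠ 0`. Hence `c = 2^{-m} (c H) H` is a combination of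
the rows `H y` with `wt y ≤ r`, these rows lie in the code, and they are linearly independent.
The dimension is therefore the number of `y ∈ F_2^m` of weight `≤ r`, that is `s_m(r)`.
-/

open Finset

/-- The character code `C_q(r, m)`: functions `c : F_2^m → F_q` whose "Fourier
coefficient" at every `y ∈ F_2^m` of Hamming weight greater than `r` vanishes. -/
def charCode (F : Type*) [Field F] (r m : ℕ) : Submodule F ((Fin m → ZMod 2) → F) where
  carrier := {c | ∀ y : Fin m → ZMod 2, r < hammingNorm y →
    ∑ x : Fin m → ZMod 2, c x * (-1 : F) ^ (∑ i, (x i).val * (y i).val) = 0}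
  zero_mem' := by intro y hy; simp
  add_mem' := by
    intro a b ha hb y hy
    simp only [Set.mem_setOf_eq] at *
    simp only [Pi.add_apply, add_mul, Finset.sum_add_distrib, ha y hy, hb y hy, add_zero]
  smul_mem' := by
    intro g a ha y hy
    simp only [Set.mem_setOf_eq] at *
    simp only [Pi.smul_apply, smul_eq_mul, mul_assoc, ← Finset.mul_sum, ha y hy, mul_zero]

open Matrix

section Walsh

variable (R : Type*) [CommRing R] (ι : Type*) [Fintype ι]

def walshMatrix : Matrix (ι → ZMod 2) (ι → ZMod 2) R :=
  of fun x y => (-1) ^ (∑ i, (x i).val * (y i).val)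

variable {R ι}

lemma walshMatrix_apply (x y : ι → ZMod 2) :
    walshMatrix R ι x y = ∏ i, (-1 : R) ^ ((x i).val * (y i).val) :=
  (prod_pow_eq_pow_sum _ _ _).symm

lemma sum_neg_one_pow_val_mul_mul (b c : ZMod 2) :
    ∑ a : ZMod 2, (-1 : R) ^ (b.val * a.val) * (-1) ^ (a.val * c.val) =
      if b = c then 2 else 0 := by
  rw [show (univ : Finset (ZMod 2)) = {0, 1} by decide, sum_pair zero_ne_one]
  obtain rfl | rfl : b = 0 ∨ b = 1 := by revert b; decide
  all_goals obtain rfl | rfl : c = 0 ∨ c = 1 := by revert c; decide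
  all_goals norm_num [ZMod.val_one]

variable [DecidableEq ι]

lemma walshMatrix_mul_self :
    walshMatrix R ι * walshMatrix R ι = (2 ^ Fintype.card ι : R) • (1 : Matrix _ _ R) := by
  ext x z
  simp only [mul_apply, walshMatrix_apply, ← prod_mul_distrib]
  rw [← Fintype.prod_sum fun i (a : ZMod 2) =>
    (-1 : R) ^ ((x i).val * a.val) * (-1) ^ (a.val * (z i).val)]
  simp only [sum_neg_one_pow_val_mul_mul, Fintype.prod_ite_zero, prod_const, card_univ,
    Matrix.smul_apply, Matrix.one_apply, funext_iff, smul_eq_mul, mul_ite, mul_one, mul_zero]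

lemma vecMul_walshMatrix_vecMul_walshMatrix (v : (ι → ZMod 2) → R) :
    v ᵥ* walshMatrix R ι ᵥ* walshMatrix R ι = (2 ^ Fintype.card ι : R) • v := by
  rw [vecMul_vecMul, walshMatrix_mul_self, vecMul_smul, vecMul_one]

lemma linearIndependent_walshMatrix_row (h2 : IsUnit (2 : R)) :
    LinearIndependent R (walshMatrix R ι).row := by
  rw [← vecMul_injective_iff]
  intro v w h
  have h' := congrArg (· ᵥ* walshMatrix R ι) h
  simp only [vecMul_walshMatrix_vecMul_walshMatrix] at h'
  exact (h2.pow _).smul_left_cancel.1 h'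

end Walsh

section Counting

variable {ι : Type*} [Fintype ι] [DecidableEq ι]

def zmodTwoFunEquivFinset : (ι → ZMod 2) ≃ Finset ι where
  toFun y := {i | y i ≠ 0}
  invFun s i := if i ∈ s then 1 else 0
  left_inv y := by
    funext i
    obtain h | h : y i = 0 ∨ y i = 1 := by generalize y i = a; revert a; decide
    all_goals simp [h]
  right_inv s := by ext i; by_cases h : i ∈ s <;> simp [h]

lemma Fintype.card_finset_card_le (α : Type*) [Fintype α] (r : ℕ) :
    Fintype.card {s : Finset α // s.card ≤ r} =
      ∑ i ∈ range (r + 1), (Fintype.card α).choose i := by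
  induction r with
  | zero => simp
  | succ r ih =>
    rw [Fintype.card_congr (Equiv.subtypeEquivRight fun _ => Nat.le_succ_iff),
      Fintype.card_subtype_or_disjoint _ _
        fun _ hle heq s hs => (by have := hle s hs; have := heq s hs; omega : False),
      ih, Fintype.card_finset_len, sum_range_succ _ (r + 1)]

lemma card_hammingNorm_le (r : ℕ) :
    Fintype.card {y : ι → ZMod 2 // hammingNorm y ≤ r} =
      ∑ i ∈ range (r + 1), (Fintype.card ι).choose i := by
  rw [← Fintype.card_finset_card_le]
  exact Fintype.card_congr (zmodTwoFunEquivFinset.subtypeEquiv fun _ => Iff.rfl)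

end Counting

section CharCode

variable {F : Type*} [Field F] {r m : ℕ}

lemma mem_charCode_iff {c : (Fin m → ZMod 2) → F} :
    c ∈ charCode F r m ↔ ∀ y, r < hammingNorm y → (c ᵥ* walshMatrix F (Fin m)) y = 0 :=
  Iff.rfl

lemma charCode_mono : Monotone fun r => charCode F r m :=
  fun _ _ hr _ hc y hy => hc y (hr.trans_lt hy)

lemma walshMatrix_row_mem_charCode {y₀ : Fin m → ZMod 2} (hy₀ : hammingNorm y₀ ≤ r) :
    walshMatrix F (Fin m) y₀ ∈ charCode F r m := by
  intro y hy
  change (walshMatrix F (Fin m) * walshMatrix F (Fin m)) y₀ y = 0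
  rw [walshMatrix_mul_self, Matrix.smul_apply, one_apply_ne, smul_zero]
  rintro rfl
  omega

lemma charCode_eq_span (h2 : (2 : F) ≠ 0) :
    charCode F r m = Submodule.span F (Set.range
      fun y : {y : Fin m → ZMod 2 // hammingNorm y ≤ r} => walshMatrix F (Fin m) y) := by
  refine le_antisymm (fun c hc => ?_) (Submodule.span_le.2 <| Set.range_subset_iff.2 fun y =>
    walshMatrix_row_mem_charCode y.2)
  have hinv : c = (2 ^ Fintype.card (Fin m) : F)⁻¹ •
      (c ᵥ* walshMatrix F (Fin m) ᵥ* walshMatrix F (Fin m)) := by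
    rw [vecMul_walshMatrix_vecMul_walshMatrix, inv_smul_smul₀ (pow_ne_zero _ h2)]
  rw [hinv, vecMul_eq_sum]
  refine Submodule.smul_mem _ _ (Submodule.sum_mem _ fun y _ => ?_)
  by_cases hy : hammingNorm y ≤ r
  · exact Submodule.smul_mem _ _ (Submodule.subset_span ⟨⟨y, hy⟩, rfl⟩)
  · rw [mem_charCode_iff.1 hc y (not_le.1 hy), zero_smul]
    exact Submodule.zero_mem _

lemma finrank_charCode (h2 : (2 : F) ≠ 0) :
    Module.finrank F (charCode F r m) = ∑ i ∈ range (r + 1), m.choose i := by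
  have hindep : LinearIndependent F
      fun y : {y : Fin m → ZMod 2 // hammingNorm y ≤ r} => walshMatrix F (Fin m) y :=
    (linearIndependent_walshMatrix_row (Ne.isUnit h2)).comp _ Subtype.val_injective
  rw [charCode_eq_span h2, finrank_span_eq_card hindep, card_hammingNorm_le, Fintype.card_fin]

end CharCode

theorem charCode_data_general {F : Type*} [Field F] (hodd : ringChar F ≠ 2)
    (m : ℕ) (r₁ r₂ : ℕ) (h1 : r₁ < r₂) :
    charCode F r₁ m ≤ charCode F r₂ m ∧
    ∀ r : ℕ, r ≤ m →
      Module.finrank F (charCode F r m) = ∑ i ∈ Finset.range (r + 1), m.choose i :=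
  ⟨charCode_mono h1.le, fun _ _ => finrank_charCode (Ring.two_ne_zero hodd)⟩

/-- over a finite field of odd characteristic, the character codes are
nested, `C_q(r₁, m) ⊆ C_q(r₂, m)` for `r₁ < r₂`, and `C_q(r, m)` has dimension
`s_m(r) = ∑_{i=0}^r binom(m, i)`. -/
theorem charCode_data {F : Type*} [Field F] [Fintype F] (hodd : ringChar F ≠ 2)
    (m : ℕ) (hm : 1 ≤ m) (r₁ r₂ : ℕ) (h1 : r₁ < r₂) (h2 : r₂ ≤ m) :
    charCode F r₁ m ≤ charCode F r₂ m ∧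
    ∀ r : ℕ, r ≤ m →
      Module.finrank F (charCode F r m) = ∑ i ∈ Finset.range (r + 1), m.choose i :=
  charCode_data_general hodd m r₁ r₂ h1
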